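/- arXiv:1005.5266 — 2 statements merged into one kernel-verified Lean document; each statement's English description precedes it below -/
import Mathlib

section
/- Let 𝔤_1 and 𝔤_2 be nonzero finite-dimensional semisimple Lie algebras over an algebraically closed field K of characteristic 0, and for i = 1,2 let V_i be an irreducible 𝔤_i-module with dim_K V_i = r_i ≥ 2. Regard V := V_1 ⊗ V_2 as a module over 𝔤 := 𝔤_1 ⊕ 𝔤_2 via (x_1, x_2)·(v_1 ⊗ v_2) = (x_1 v_1) ⊗ v_2 + v_1 ⊗ (x_2 v_2). If r_1 divides r_2, then (V^{⊗ r_2})^𝔤 ≠ 0; note that r_2 < r_1 r_2 = dim V, so V admits a nonzero 𝔤-invariant in a tensor power of exponent strictly smaller than dim V. -/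
open scoped TensorProduct

/-- The action of an element `(x₁, x₂)` of the direct sum `𝔤₁ ⊕ 𝔤₂` on `V₁ ⊗ V₂`, given by
`(x₁, x₂) · (v₁ ⊗ v₂) = (x₁ v₁) ⊗ v₂ + v₁ ⊗ (x₂ v₂)`. -/
noncomputable def prodTensorAction (K : Type*) [CommRing K]
    (𝔤₁ : Type*) [LieRing 𝔤₁] [LieAlgebra K 𝔤₁]
    (𝔤₂ : Type*) [LieRing 𝔤₂] [LieAlgebra K 𝔤₂]
    (V₁ : Type*) [AddCommGroup V₁] [Module K V₁] [LieRingModule 𝔤₁ V₁] [LieModule K 𝔤₁ V₁]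
    (V₂ : Type*) [AddCommGroup V₂] [Module K V₂] [LieRingModule 𝔤₂ V₂] [LieModule K 𝔤₂ V₂]
    (x : 𝔤₁ × 𝔤₂) : Module.End K (V₁ ⊗[K] V₂) :=
  TensorProduct.map (LieModule.toEnd K 𝔤₁ V₁ x.1) LinearMap.id +
    TensorProduct.map LinearMap.id (LieModule.toEnd K 𝔤₂ V₂ x.2)

/-- The derivation action of `(x₁, x₂) ∈ 𝔤₁ ⊕ 𝔤₂` on the `n`-fold tensor power
`(V₁ ⊗ V₂)^{⊗n}`. -/
noncomputable def prodTensorPowerAction (K : Type*) [CommRing K]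
    (𝔤₁ : Type*) [LieRing 𝔤₁] [LieAlgebra K 𝔤₁]
    (𝔤₂ : Type*) [LieRing 𝔤₂] [LieAlgebra K 𝔤₂]
    (V₁ : Type*) [AddCommGroup V₁] [Module K V₁] [LieRingModule 𝔤₁ V₁] [LieModule K 𝔤₁ V₁]
    (V₂ : Type*) [AddCommGroup V₂] [Module K V₂] [LieRingModule 𝔤₂ V₂] [LieModule K 𝔤₂ V₂]
    (n : ℕ) (x : 𝔤₁ × 𝔤₂) : Module.End K (⨂[K]^n (V₁ ⊗[K] V₂)) :=
  ∑ i : Fin n, PiTensorProduct.map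
    (Function.update (fun _ : Fin n => (LinearMap.id : V₁ ⊗[K] V₂ →ₗ[K] V₁ ⊗[K] V₂)) i
      (prodTensorAction K 𝔤₁ 𝔤₂ V₁ V₂ x))

/-- The subspace `((V₁ ⊗ V₂)^{⊗n})^{𝔤₁ ⊕ 𝔤₂}` of invariants. -/
noncomputable def prodTensorPowerInvariants (K : Type*) [CommRing K]
    (𝔤₁ : Type*) [LieRing 𝔤₁] [LieAlgebra K 𝔤₁]
    (𝔤₂ : Type*) [LieRing 𝔤₂] [LieAlgebra K 𝔤₂]
    (V₁ : Type*) [AddCommGroup V₁] [Module K V₁] [LieRingModule 𝔤₁ V₁] [LieModule K 𝔤₁ V₁]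
    (V₂ : Type*) [AddCommGroup V₂] [Module K V₂] [LieRingModule 𝔤₂ V₂] [LieModule K 𝔤₂ V₂]
    (n : ℕ) : Submodule K (⨂[K]^n (V₁ ⊗[K] V₂)) :=
  ⨅ x : 𝔤₁ × 𝔤₂, LinearMap.ker (prodTensorPowerAction K 𝔤₁ 𝔤₂ V₁ V₂ n x)

/-!
Under the derivation action `∑ᵢ 1 ⊗ ⋯ ⊗ f ⊗ ⋯ ⊗ 1`, an endomorphism `f` of a space with basis
`b₁, …, b_r` multiplies the determinant tensor `∑_σ sgn σ • b_{σ 1} ⊗ ⋯ ⊗ b_{σ r}` by `tr f`: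
expanding `f (bᵢ)` in the basis, every off-diagonal term repeats a basis vector and cancels by
antisymmetry. Hence a tensor product of `k` determinant tensors is multiplied by `k • tr f`.
A semisimple Lie algebra acts by traceless endomorphisms, so `det(V₁)^{⊗ r₂/r₁}` and `det(V₂)`
are invariants in `V₁^{⊗ r₂}` and `V₂^{⊗ r₂}`. Tensoring them factor by factor gives an invariant
in `(V₁ ⊗ V₂)^{⊗ r₂}`, which is nonzero because both factors are.
-/

open Equiv Equiv.Perm
open Function hiding swap

lemma Equiv.prodCongrRight_update_swap_mul {κ α : Type*} [DecidableEq κ] [DecidableEq α]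
    (σ : κ → Perm α) (s : κ) (p q : α) :
    prodCongrRight (update σ s (swap p q * σ s)) = swap (s, p) (s, q) * prodCongrRight σ := by
  ext ⟨t, i⟩ : 1
  rcases eq_or_ne t s with rfl | h
  · simp [(Prod.mk_right_injective t).swap_apply]
  · simp [h, swap_apply_of_ne_of_ne]

namespace PiTensorProduct

section derivMap

variable {K M ι ι' : Type*} [CommRing K] [AddCommGroup M] [Module K M]
  [Fintype ι] [DecidableEq ι] [Fintype ι'] [DecidableEq ι']

noncomputable def derivMap (f : Module.End K M) : Module.End K (⨂[K] _ : ι, M) :=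
  ∑ i, map (update (fun _ => LinearMap.id) i f)

lemma derivMap_tprod (f : Module.End K M) (v : ι → M) :
    derivMap f (tprod K v) = ∑ i, tprod K (update v i (f (v i))) := by
  simp only [derivMap, LinearMap.sum_apply, map_tprod]
  refine Finset.sum_congr rfl fun i _ => congrArg _ (funext fun j => ?_)
  rcases eq_or_ne j i with rfl | h <;> simp [*]

lemma derivMap_reindex (f : Module.End K M) (e : ι ≃ ι') (x : ⨂[K] _ : ι, M) :
    derivMap f (reindex K (fun _ => M) e x) = reindex K (fun _ => M) e (derivMap f x) := by
  induction x using PiTensorProduct.induction_on with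
  | smul_tprod c v =>
    simp only [map_smul, reindex_tprod, derivMap_tprod, map_sum]
    rw [← e.symm.sum_comp]
    simp only [update_apply_equiv_apply, symm_symm, apply_symm_apply]; rfl
  | add x y hx hy => simp only [map_add, hx, hy]

lemma derivMap_tprod_comp (f : Module.End K M) (π : Perm ι) (w : ι → M) :
    derivMap f (tprod K (w ∘ π)) = ∑ i, tprod K (update w i (f (w i)) ∘ π) := by
  have hperm : ∀ w : ι → M, tprod K (w ∘ π) = reindex K (fun _ => M) π.symm (tprod K w) :=
    fun w => by rw [reindex_tprod, symm_symm]; rfl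
  simp only [hperm, derivMap_reindex, derivMap_tprod, map_sum]

end derivMap

section blockAlt

variable (K : Type*) {M κ α : Type*} [CommRing K] [AddCommGroup M] [Module K M]
  [Fintype κ] [DecidableEq κ] [Fintype α] [DecidableEq α]

/-- `blockAlt K v = ⨂_{s : κ} ∑_{τ : Perm α} sgn τ • ⨂_{i : α} v (s, τ i)`, the tensor product
over the blocks `{s} × α` of their antisymmetrisations. -/
noncomputable def blockAlt : MultilinearMap K (fun _ : κ × α => M) (⨂[K] _ : κ × α, M) :=
  ∑ σ : κ → Perm α, ((sign (prodCongrRight σ) : ℤ) : K) • (tprod K).domDomCongr (prodCongrRight σ)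

variable {K}

lemma blockAlt_apply (v : κ × α → M) :
    blockAlt K v =
      ∑ σ : κ → Perm α, ((sign (prodCongrRight σ) : ℤ) : K) • tprod K (v ∘ prodCongrRight σ) := by
  simp only [blockAlt, sum_apply, smul_apply, MultilinearMap.domDomCongr_apply]
  rfl

lemma blockAlt_eq_zero_of_eq (v : κ × α → M) {s : κ} {p q : α} (hpq : p ≠ q)
    (hv : v (s, p) = v (s, q)) : blockAlt K v = 0 := by
  rw [blockAlt_apply]
  refine Finset.sum_involution (fun σ _ => update σ s (swap p q * σ s)) (fun σ _ => ?_)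
    (fun σ _ _ h => ?_) (fun _ _ => Finset.mem_univ _) (fun σ _ => ?_)
  · rw [prodCongrRight_update_swap_mul, Perm.sign_mul, sign_swap (by simp [hpq])]
    have hvswap : v ∘ swap (s, p) (s, q) = v := funext fun x => apply_swap_eq_self hv x
    simp [← comp_assoc, hvswap]
  · have := congrFun h s
    simp [hpq] at this
  · simp [swap_mul_self_mul]

lemma derivMap_blockAlt (f : Module.End K M) (v : κ × α → M) :
    derivMap f (blockAlt K v) = ∑ x, blockAlt K (update v x (f (v x))) := by
  simp only [blockAlt_apply, map_sum, map_smul, derivMap_tprod_comp, Finset.smul_sum]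
  exact Finset.sum_comm

lemma blockAlt_update_basis (b : Module.Basis α K M) (x : κ × α) (p : α) :
    blockAlt K (update (fun y => b y.2) x (b p)) =
      if p = x.2 then blockAlt K (fun y => b y.2) else 0 := by
  obtain ⟨s, i⟩ := x
  split_ifs with h
  · subst h
    rw [update_eq_self_iff.mpr rfl]
  · refine blockAlt_eq_zero_of_eq _ (s := s) (Ne.symm h) ?_
    simp [h]

lemma blockAlt_update_basis_eq_repr_smul (b : Module.Basis α K M) (f : Module.End K M) (x : κ × α) :
    blockAlt K (update (fun y => b y.2) x (f (b x.2))) =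
      b.repr (f (b x.2)) x.2 • blockAlt K (fun y => b y.2) := by
  conv_lhs => rw [← b.sum_repr (f (b x.2))]
  simp only [MultilinearMap.map_update_sum, MultilinearMap.map_update_smul,
    blockAlt_update_basis, smul_ite, smul_zero, Finset.sum_ite_eq', Finset.mem_univ, if_true]

lemma derivMap_blockAlt_basis (b : Module.Basis α K M) (f : Module.End K M) :
    derivMap f (blockAlt K (fun y : κ × α => b y.2)) =
      (Fintype.card κ * LinearMap.trace K M f) • blockAlt K (fun y : κ × α => b y.2) := by
  rw [derivMap_blockAlt, LinearMap.trace_eq_matrix_trace K b, Matrix.trace]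
  simp [blockAlt_update_basis_eq_repr_smul, Fintype.sum_prod_type, ← Finset.sum_smul,
    LinearMap.toMatrix_apply]

lemma blockAlt_basis_ne_zero [Nontrivial K] (b : Module.Basis α K M) :
    blockAlt K (fun y : κ × α => b y.2) ≠ 0 := by
  have hcoord : (Basis.piTensorProduct fun _ : κ × α => b).repr
      (blockAlt K (fun y => b y.2)) Prod.snd = 1 := by
    rw [blockAlt_apply, map_sum, Finsupp.finsetSum_apply, Finset.sum_eq_single 1]
    · simp [sign_prodCongrRight]
    · intro σ _ hσ
      obtain ⟨s, hs⟩ := Function.ne_iff.mp hσ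
      obtain ⟨i, hi⟩ := not_forall.mp (mt Equiv.ext hs)
      simp only [map_smul, Finsupp.smul_apply, Basis.piTensorProduct_repr_tprod_apply]
      refine smul_eq_zero_of_right _ (Finset.prod_eq_zero (Finset.mem_univ (s, i)) ?_)
      simpa [Finsupp.single_apply] using hi
    · simp
  intro h
  simp [h] at hcoord

end blockAlt

section zipTmul

variable {K M N ι : Type*} [CommRing K] [AddCommGroup M] [Module K M] [AddCommGroup N] [Module K N]

noncomputable def zipTmul :
    (⨂[K] _ : ι, M) →ₗ[K] (⨂[K] _ : ι, N) →ₗ[K] ⨂[K] _ : ι, M ⊗[K] N :=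
  map₂ fun _ => TensorProduct.mk K M N

lemma zipTmul_tprod_tprod (u : ι → M) (w : ι → N) :
    zipTmul (tprod K u) (tprod K w) = tprod K fun i => u i ⊗ₜ w i :=
  map₂_tprod_tprod _ _ _

variable [Fintype ι] [DecidableEq ι]

lemma derivMap_zipTmul_tprod_tprod (f : Module.End K M) (g : Module.End K N) (u : ι → M)
    (w : ι → N) :
    derivMap (TensorProduct.map f LinearMap.id + TensorProduct.map LinearMap.id g)
        (zipTmul (tprod K u) (tprod K w)) =
      zipTmul (derivMap f (tprod K u)) (tprod K w) +
        zipTmul (tprod K u) (derivMap g (tprod K w)) := by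
  have hupd : ∀ i (a : M) (c : N), update (fun j => u j ⊗ₜ[K] w j) i (a ⊗ₜ c) =
      fun j => update u i a j ⊗ₜ update w i c j :=
    fun i a c => (funext (apply_update₂ (fun _ a c => a ⊗ₜ[K] c) u w i a c)).symm
  simp only [zipTmul_tprod_tprod, derivMap_tprod, map_sum, LinearMap.sum_apply,
    ← Finset.sum_add_distrib, LinearMap.add_apply, TensorProduct.map_tmul, LinearMap.id_apply,
    MultilinearMap.map_update_add, hupd, update_eq_self]

lemma derivMap_zipTmul (f : Module.End K M) (g : Module.End K N) (x : ⨂[K] _ : ι, M)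
    (y : ⨂[K] _ : ι, N) :
    derivMap (TensorProduct.map f LinearMap.id + TensorProduct.map LinearMap.id g) (zipTmul x y) =
      zipTmul (derivMap f x) y + zipTmul x (derivMap g y) := by
  induction x using PiTensorProduct.induction_on with
  | smul_tprod c u =>
    induction y using PiTensorProduct.induction_on with
    | smul_tprod d w =>
      simp only [map_smul, LinearMap.smul_apply, derivMap_zipTmul_tprod_tprod, smul_add]
    | add y y' hy hy' =>
      simp only [map_add, hy, hy']
      abel
  | add x x' hx hx' =>
    simp only [map_add, LinearMap.add_apply, hx, hx']
    abel

end zipTmul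

section Field

variable {K M N ι : Type*} [Field K] [AddCommGroup M] [Module K M] [AddCommGroup N] [Module K N]
  [Fintype ι]

lemma zipTmul_ne_zero {x : ⨂[K] _ : ι, M} {y : ⨂[K] _ : ι, N} (hx : x ≠ 0) (hy : y ≠ 0) :
    zipTmul x y ≠ 0 := by
  let bM := Basis.piTensorProduct fun _ : ι => Module.Basis.ofVectorSpace K M
  let bN := Basis.piTensorProduct fun _ : ι => Module.Basis.ofVectorSpace K N
  let bMN := Basis.piTensorProduct fun _ : ι =>
    (Module.Basis.ofVectorSpace K M).tensorProduct (Module.Basis.ofVectorSpace K N)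
  have hrepr : ∀ x y p q,
      bMN.repr (zipTmul x y) (fun i => (p i, q i)) = bM.repr x p * bN.repr y q := by
    intro x y p q
    induction x using PiTensorProduct.induction_on with
    | smul_tprod c u =>
      induction y using PiTensorProduct.induction_on with
      | smul_tprod d w =>
        simp [bM, bN, bMN, zipTmul_tprod_tprod, Finset.prod_mul_distrib]
        ring
      | add y y' hy hy' => simp only [map_add, Finsupp.add_apply, hy, hy', mul_add]
    | add x x' hx hx' =>
      simp only [map_add, LinearMap.add_apply, Finsupp.add_apply, hx, hx', add_mul]
  obtain ⟨p, hp⟩ := Finsupp.ne_iff.mp ((LinearEquiv.map_ne_zero_iff bM.repr).mpr hx)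
  obtain ⟨q, hq⟩ := Finsupp.ne_iff.mp ((LinearEquiv.map_ne_zero_iff bN.repr).mpr hy)
  intro h
  have := hrepr x y p q
  rw [h, map_zero, Finsupp.zero_apply] at this
  exact mul_ne_zero hp hq this.symm

end Field

end PiTensorProduct

section Semisimple

variable (K L : Type*) [CommRing K] [LieRing L] [LieAlgebra K L] [LieAlgebra.IsSemisimple K L]

lemma LieAlgebra.IsSemisimple.lowerCentralSeries_one_eq_top :
    LieModule.lowerCentralSeries K L L 1 = ⊤ := by
  rw [LieModule.lowerCentralSeries_succ, LieModule.lowerCentralSeries_zero, eq_top_iff]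
  conv_lhs => rw [← LieAlgebra.IsSemisimple.sSup_atoms_eq_top (R := K) (L := L)]
  refine sSup_le fun I hI => ?_
  calc I = ⁅I, I⁆ :=
        (lie_eq_self_of_isAtom_of_nonabelian I hI (non_abelian_of_isAtom I hI)).symm
    _ ≤ ⁅(⊤ : LieIdeal K L), (⊤ : LieIdeal K L)⁆ := LieSubmodule.mono_lie le_top le_top

lemma LieModule.trace_toEnd_eq_zero_of_isSemisimple (M : Type*) [AddCommGroup M] [Module K M]
    [LieRingModule L M] [LieModule K L M] (x : L) :
    LinearMap.trace K M (LieModule.toEnd K L M x) = 0 :=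
  trace_toEnd_eq_zero_of_mem_lcs K L M le_rfl <|
    (LieAlgebra.IsSemisimple.lowerCentralSeries_one_eq_top K L).symm ▸ LieSubmodule.mem_top x

end Semisimple

lemma PiTensorProduct.derivMap_toEnd_blockAlt_eq_zero {K L M κ α : Type*} [Field K] [LieRing L]
    [LieAlgebra K L] [LieAlgebra.IsSemisimple K L] [AddCommGroup M] [Module K M]
    [LieRingModule L M] [LieModule K L M] [Fintype κ] [DecidableEq κ] [Fintype α] [DecidableEq α]
    (b : Module.Basis α K M) (x : L) :
    derivMap (LieModule.toEnd K L M x) (blockAlt K fun y : κ × α => b y.2) = 0 := by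
  rw [derivMap_blockAlt_basis, LieModule.trace_toEnd_eq_zero_of_isSemisimple, mul_zero, zero_smul]

open PiTensorProduct in
theorem invariants_ne_bot_of_dvd_general
    (K : Type*) [Field K]
    (𝔤₁ : Type*) [LieRing 𝔤₁] [LieAlgebra K 𝔤₁] [LieAlgebra.IsSemisimple K 𝔤₁]
    (𝔤₂ : Type*) [LieRing 𝔤₂] [LieAlgebra K 𝔤₂] [LieAlgebra.IsSemisimple K 𝔤₂]
    (V₁ : Type*) [AddCommGroup V₁] [Module K V₁] [LieRingModule 𝔤₁ V₁] [LieModule K 𝔤₁ V₁]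
    [FiniteDimensional K V₁]
    (V₂ : Type*) [AddCommGroup V₂] [Module K V₂] [LieRingModule 𝔤₂ V₂] [LieModule K 𝔤₂ V₂]
    [FiniteDimensional K V₂]
    (r₁ r₂ : ℕ) (hr₁ : r₁ = Module.finrank K V₁) (hr₂ : r₂ = Module.finrank K V₂)
    (hr₁2 : 2 ≤ r₁) (hr₂2 : 2 ≤ r₂) (hdvd : r₁ ∣ r₂) :
    prodTensorPowerInvariants K 𝔤₁ 𝔤₂ V₁ V₂ r₂ ≠ ⊥ ∧ r₂ < r₁ * r₂ := by
  refine ⟨?_, by nlinarith⟩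
  obtain ⟨c, hc⟩ := hdvd
  let b₁ := Module.finBasisOfFinrankEq K V₁ hr₁.symm
  let b₂ := Module.finBasisOfFinrankEq K V₂ hr₂.symm
  let e₁ : Fin c × Fin r₁ ≃ Fin r₂ := finProdFinEquiv.trans (finCongr (by rw [hc, mul_comm]))
  let e₂ : Unit × Fin r₂ ≃ Fin r₂ := Equiv.uniqueProd (Fin r₂) Unit
  let ω₁ := reindex K (fun _ => V₁) e₁ (blockAlt K fun y => b₁ y.2)
  let ω₂ := reindex K (fun _ => V₂) e₂ (blockAlt K fun y => b₂ y.2)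
  have hω₁ : ω₁ ≠ 0 := (LinearEquiv.map_ne_zero_iff _).mpr (blockAlt_basis_ne_zero b₁)
  have hω₂ : ω₂ ≠ 0 := (LinearEquiv.map_ne_zero_iff _).mpr (blockAlt_basis_ne_zero b₂)
  refine Submodule.ne_bot_iff _ |>.mpr ⟨zipTmul ω₁ ω₂, ?_, zipTmul_ne_zero hω₁ hω₂⟩
  simp only [prodTensorPowerInvariants, Submodule.mem_iInf, LinearMap.mem_ker]
  intro x
  change derivMap (prodTensorAction K 𝔤₁ 𝔤₂ V₁ V₂ x) (zipTmul ω₁ ω₂) = 0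
  rw [prodTensorAction, derivMap_zipTmul, derivMap_reindex, derivMap_reindex,
    derivMap_toEnd_blockAlt_eq_zero, derivMap_toEnd_blockAlt_eq_zero]
  simp

/-- Let `𝔤₁` and `𝔤₂` be nonzero finite-dimensional semisimple Lie algebras
over an algebraically closed field `K` of characteristic `0`, and for `i = 1,2` let `Vᵢ` be an
irreducible `𝔤ᵢ`-module with `dim_K Vᵢ = rᵢ ≥ 2`. Regard `V := V₁ ⊗ V₂` as a module over
`𝔤 := 𝔤₁ ⊕ 𝔤₂` in the natural way. If `r₁ ∣ r₂`, then `(V^{⊗r₂})^𝔤 ≠ 0`; since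
`r₂ < r₁r₂ = dim V`, the module `V` admits a nonzero `𝔤`-invariant in a tensor power of
exponent strictly smaller than `dim V`. -/
theorem invariants_ne_bot_of_dvd
    (K : Type*) [Field K] [IsAlgClosed K] [CharZero K]
    (𝔤₁ : Type*) [LieRing 𝔤₁] [LieAlgebra K 𝔤₁] [FiniteDimensional K 𝔤₁] [Nontrivial 𝔤₁]
    [LieAlgebra.IsSemisimple K 𝔤₁]
    (𝔤₂ : Type*) [LieRing 𝔤₂] [LieAlgebra K 𝔤₂] [FiniteDimensional K 𝔤₂] [Nontrivial 𝔤₂]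
    [LieAlgebra.IsSemisimple K 𝔤₂]
    (V₁ : Type*) [AddCommGroup V₁] [Module K V₁] [LieRingModule 𝔤₁ V₁] [LieModule K 𝔤₁ V₁]
    [FiniteDimensional K V₁] [LieModule.IsIrreducible K 𝔤₁ V₁]
    (V₂ : Type*) [AddCommGroup V₂] [Module K V₂] [LieRingModule 𝔤₂ V₂] [LieModule K 𝔤₂ V₂]
    [FiniteDimensional K V₂] [LieModule.IsIrreducible K 𝔤₂ V₂]
    (r₁ r₂ : ℕ) (hr₁ : r₁ = Module.finrank K V₁) (hr₂ : r₂ = Module.finrank K V₂)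
    (hr₁2 : 2 ≤ r₁) (hr₂2 : 2 ≤ r₂) (hdvd : r₁ ∣ r₂) :
    prodTensorPowerInvariants K 𝔤₁ 𝔤₂ V₁ V₂ r₂ ≠ ⊥ ∧ r₂ < r₁ * r₂ :=
  invariants_ne_bot_of_dvd_general K 𝔤₁ 𝔤₂ V₁ V₂ r₁ r₂ hr₁ hr₂ hr₁2 hr₂2 hdvd
end

section
/- Let G be a compact, topologically finitely generated subgroup of GL_r(𝒪) and let n_0 ≥ 1 be an integer. Suppose there is an integer k ≥ 0 such that for every n > n_0 the quotient G_n/G_{n+n_0} is isomorphic to (ℤ/p^{n_0}ℤ)^k. Then for every n > n_0, the closure in G of the subgroup generated by the set of p^{n_0}-th powers {g^{p^{n_0}} : g ∈ G_n} equals G_{n+n_0}. -/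
open Matrix

set_option synthInstance.maxHeartbeats 1000000
set_option maxHeartbeats 1000000

/-- The valuation ring `𝒪 = {x : ℂ_p | ‖x‖ ≤ 1}`. -/
def integerSubring (Cp : Type*) [NormedField Cp] [IsUltrametricDist Cp] : Subring Cp where
  carrier := {x | ‖x‖ ≤ 1}
  one_mem' := by simp
  mul_mem' := by
    intro a b (ha : ‖a‖ ≤ 1) (hb : ‖b‖ ≤ 1)
    calc ‖a * b‖ = ‖a‖ * ‖b‖ := norm_mul a b
    _ ≤ 1 := mul_le_one₀ ha (norm_nonneg b) hb
  zero_mem' := by simp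
  add_mem' := by
    intro a b (ha : ‖a‖ ≤ 1) (hb : ‖b‖ ≤ 1)
    exact (IsUltrametricDist.norm_add_le_max a b).trans (max_le ha hb)
  neg_mem' := by
    intro a (ha : ‖a‖ ≤ 1)
    simpa using ha

/-- The ideal `pⁿ𝒪 = {x ∈ 𝒪 : ‖x‖ ≤ p⁻ⁿ}` of the valuation ring `𝒪`. -/
def normIdeal (p : ℕ) (Cp : Type*) [NormedField Cp] [IsUltrametricDist Cp] (n : ℕ) :
    Ideal (integerSubring Cp) where
  carrier := {x | ‖(x : Cp)‖ ≤ ((p : ℝ) ^ n)⁻¹}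
  zero_mem' := by
    show ‖((0 : integerSubring Cp) : Cp)‖ ≤ _
    simp
  add_mem' := by
    intro a b (ha : ‖(a : Cp)‖ ≤ _) (hb : ‖(b : Cp)‖ ≤ _)
    show ‖((a + b : integerSubring Cp) : Cp)‖ ≤ _
    push_cast
    exact (IsUltrametricDist.norm_add_le_max (a : Cp) (b : Cp)).trans (max_le ha hb)
  smul_mem' := by
    intro c x (hx : ‖(x : Cp)‖ ≤ _)
    show ‖((c • x : integerSubring Cp) : Cp)‖ ≤ _
    have hc : ‖(c : Cp)‖ ≤ 1 := c.2
    calc ‖((c • x : integerSubring Cp) : Cp)‖ = ‖(c : Cp)‖ * ‖(x : Cp)‖ := by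
          push_cast [smul_eq_mul]
          exact norm_mul _ _
    _ ≤ 1 * ((p : ℝ) ^ n)⁻¹ := by
          exact mul_le_mul hc hx (norm_nonneg _) zero_le_one
    _ = ((p : ℝ) ^ n)⁻¹ := one_mul _

/-- Reduction modulo `pⁿ` on `GL_r(𝒪)`. -/
def glReduction (p : ℕ) (Cp : Type*) [NormedField Cp] [IsUltrametricDist Cp] (r n : ℕ) :
    GL (Fin r) (integerSubring Cp) →*
      (Matrix (Fin r) (Fin r) ((integerSubring Cp) ⧸ normIdeal p Cp n))ˣ :=
  Units.map ((Ideal.Quotient.mk (normIdeal p Cp n)).mapMatrix).toMonoidHom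

/-- The congruence subgroup `G_n ≤ G`: the kernel in `G` of reduction modulo `pⁿ`;
equivalently `{g ∈ G : every entry of g - 1 has norm ≤ p⁻ⁿ}`. -/
def congrSubgroup (p : ℕ) (Cp : Type*) [NormedField Cp] [IsUltrametricDist Cp] (r : ℕ)
    (G : Subgroup (GL (Fin r) (integerSubring Cp))) (n : ℕ) :
    Subgroup (GL (Fin r) (integerSubring Cp)) :=
  G ⊓ (glReduction p Cp r n).ker

/-!
Write `q = p ^ n₀` and let `m > n₀`. If `g ≡ 1` modulo `p ^ m`, then
`g ^ q ≡ 1 + q • (g - 1)` modulo `p ^ (2 * m)`, and `2 * m ≥ m + n₀ + 1`. As multiplication by `q`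
shifts `p`-adic levels by exactly `n₀`, the map `g ↦ g ^ q` sends `G_m` into `G_{m+n₀}` and induces
an injection `G_m / G_{m+1} ↪ G_{m+n₀} / G_{m+n₀+1}`. Computing `[G_m : G_{m+n₀+1}]` through
`G_{m+1}` and through `G_{m+n₀}`, and using that `[G_m : G_{m+n₀}] = [G_{m+1} : G_{m+1+n₀}]` is
finite by hypothesis, both sides of the injection have the same finite size, so it is onto: every
element of `G_{m+n₀}` is a `q`-th power of an element of `G_m` modulo `G_{m+n₀+1}`. Iterating from
`m = n` approximates any `x ∈ G_{n+n₀}` to arbitrary `p`-adic precision by products of `q`-th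
powers, and `G_{n+n₀}` is closed because `G` is compact.
-/

open Filter Topology

theorem pow_sub_one_sub_nsmul_mem {M : Type*} [Ring M] (J : Ideal M) {B : M}
    (hB : (B - 1) * (B - 1) ∈ J) (q : ℕ) : B ^ q - 1 - q • (B - 1) ∈ J := by
  induction q with
  | zero => simp
  | succ q ih =>
    have h : B ^ (q + 1) - 1 - (q + 1) • (B - 1) =
        B * (B ^ q - 1 - q • (B - 1)) + q • ((B - 1) * (B - 1)) := by
      simp only [add_smul, one_smul, smul_sub, mul_sub, sub_mul, mul_smul_comm, pow_succ', mul_one,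
        one_mul]
      abel
    rw [h]
    exact J.add_mem (J.mul_mem_left B ih) (J.nsmul_mem hB q)

theorem Ideal.mul_mem_matrix_mul {R n : Type*} [CommRing R] [Fintype n] [DecidableEq n]
    {I J : Ideal R} {A B : Matrix n n R} (hA : A ∈ I.matrix n) (hB : B ∈ J.matrix n) :
    A * B ∈ (I * J).matrix n := fun i j =>
  Ideal.sum_mem _ fun k _ => Ideal.mul_mem_mul (hA i k) (hB k j)

theorem Ideal.isClosed_matrix {R n : Type*} [Semiring R] [TopologicalSpace R] [Fintype n]
    [DecidableEq n] {I : Ideal R} (hI : IsClosed (I : Set R)) :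
    IsClosed (I.matrix n : Set (Matrix n n R)) := by
  have h : (I.matrix n : Set (Matrix n n R)) =
      ⋂ i, ⋂ j, (fun M : Matrix n n R => M i j) ⁻¹' I := by
    ext M
    simp only [SetLike.mem_coe, Ideal.mem_matrix, Set.mem_iInter, Set.mem_preimage]
  rw [h]
  exact isClosed_iInter fun i => isClosed_iInter fun j =>
    hI.preimage (continuous_id.matrix_elem i j)

namespace Subgroup

variable {G : Type*} [Group G]

theorem relIndex_eq_card_of_surjective {H K : Subgroup G} {Q : Type*} [Group Q] (f : H →* Q)
    (hf : Function.Surjective f) (hker : f.ker = K.subgroupOf H) : K.relIndex H = Nat.card Q := by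
  rw [relIndex, ← hker, index_ker, MonoidHom.range_eq_top.2 hf, card_top]

theorem relIndex_succ_eq_of_relIndex_add_eq {N : ℕ → Subgroup G} (hN : Antitone N) {m d : ℕ}
    (h : (N (m + d)).relIndex (N m) = (N (m + 1 + d)).relIndex (N (m + 1)))
    (h0 : (N (m + d)).relIndex (N m) ≠ 0) :
    (N (m + 1)).relIndex (N m) = (N (m + d + 1)).relIndex (N (m + d)) := by
  have h1 := relIndex_mul_relIndex (N (m + d + 1)) (N (m + 1)) (N m)
    (hN (by omega)) (hN (by omega))
  have h2 := relIndex_mul_relIndex (N (m + d + 1)) (N (m + d)) (N m)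
    (hN (by omega)) (hN (by omega))
  rw [add_right_comm m 1 d] at h
  rw [← h] at h1
  exact mul_left_cancel₀ h0 (h1.trans (h2.symm.trans (mul_comm _ _)))

theorem exists_inv_mul_mem_of_relIndex_eq {A A' B B' : Subgroup G} (f : G → G)
    (hf : ∀ a ∈ A, f a ∈ B) (hf' : ∀ a ∈ A, ∀ a' ∈ A, (f a)⁻¹ * f a' ∈ B' ↔ a⁻¹ * a' ∈ A')
    (h : A'.relIndex A = B'.relIndex B) (h0 : B'.relIndex B ≠ 0) {b : G} (hb : b ∈ B) :
    ∃ a ∈ A, (f a)⁻¹ * b ∈ B' := by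
  let F : A ⧸ A'.subgroupOf A → B ⧸ B'.subgroupOf B :=
    Quotient.map' (fun a => ⟨f a, hf a a.2⟩) fun a a' haa' => by
      simpa [QuotientGroup.leftRel_apply, mem_subgroupOf, hf' a a.2 a' a'.2] using haa'
  have hF : Function.Injective F := by
    intro x x'
    induction x using QuotientGroup.induction_on with | H a => ?_
    induction x' using QuotientGroup.induction_on with | H a' => ?_
    intro e
    replace e : (⟨f a, hf a a.2⟩ : B) = ((⟨f a', hf a' a'.2⟩ : B) : B ⧸ B'.subgroupOf B) := e
    rw [QuotientGroup.eq, mem_subgroupOf] at e ⊢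
    simpa [hf' a a.2 a' a'.2] using e
  have : Finite (B ⧸ B'.subgroupOf B) := Nat.finite_of_card_ne_zero h0
  obtain ⟨x, hx⟩ := ((Nat.bijective_iff_injective_and_card F).2 ⟨hF, h⟩).2 (⟨b, hb⟩ : B)
  induction x using QuotientGroup.induction_on with | H a => ?_
  replace hx : (⟨f a, hf a a.2⟩ : B) = ((⟨b, hb⟩ : B) : B ⧸ B'.subgroupOf B) := hx
  rw [QuotientGroup.eq, mem_subgroupOf] at hx
  exact ⟨a, a.2, hx⟩

theorem exists_mem_inv_mul_mem_of_step {H : Subgroup G} {N : ℕ → Subgroup G} {j₀ : ℕ}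
    (step : ∀ j ≥ j₀, ∀ y ∈ N j, ∃ h ∈ H, h⁻¹ * y ∈ N (j + 1)) {x : G} (hx : x ∈ N j₀) (i : ℕ) :
    ∃ h ∈ H, h⁻¹ * x ∈ N (j₀ + i) := by
  induction i with
  | zero => exact ⟨1, H.one_mem, by simpa using hx⟩
  | succ i ih =>
    obtain ⟨h, hH, hhx⟩ := ih
    obtain ⟨h', hH', hh'x⟩ := step (j₀ + i) (by omega) _ hhx
    exact ⟨h * h', H.mul_mem hH hH', by rwa [_root_.mul_inv_rev, mul_assoc]⟩

end Subgroup

theorem mem_closure_of_tendsto_inv_mul {G ι : Type*} [TopologicalSpace G] [Group G]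
    [IsTopologicalGroup G] {l : Filter ι} [l.NeBot] {s : Set G} {x : G} {h : ι → G}
    (hs : ∀ i, h i ∈ s) (hx : Tendsto (fun i => (h i)⁻¹ * x) l (𝓝 1)) : x ∈ closure s := by
  have hh : Tendsto h l (𝓝 x) := by simpa using (tendsto_const_nhds (x := x)).mul hx.inv
  exact mem_closure_of_tendsto hh (Eventually.of_forall hs)

section CongruenceSubgroups

variable {p : ℕ} {Cp : Type*} [NormedField Cp] [IsUltrametricDist Cp] {r : ℕ}

local notation "𝒪" => integerSubring Cp
local notation "𝕄" => Matrix (Fin r) (Fin r) 𝒪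

theorem mem_normIdeal {n : ℕ} {x : 𝒪} :
    x ∈ normIdeal p Cp n ↔ ‖(x : Cp)‖ ≤ ((p : ℝ) ^ n)⁻¹ := Iff.rfl

theorem normIdeal_antitone : Antitone (normIdeal p Cp) := by
  intro a b hab x (hx : ‖(x : Cp)‖ ≤ _)
  refine hx.trans ?_
  rw [← inv_pow, ← inv_pow]
  exact pow_le_pow_of_le_one (by positivity) (Nat.cast_inv_le_one p) hab

theorem normIdeal_mul_le (a b : ℕ) :
    normIdeal p Cp a * normIdeal p Cp b ≤ normIdeal p Cp (a + b) := by
  refine Ideal.mul_le.2 fun x hx y hy => ?_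
  rw [mem_normIdeal, pow_add, mul_inv]
  push_cast
  rw [norm_mul]
  exact mul_le_mul hx hy (norm_nonneg _) (by positivity)

theorem norm_coe_pow_nsmul (hnorm : ‖(p : Cp)‖ = (p : ℝ)⁻¹) (t : ℕ) (x : 𝒪) :
    ‖((p ^ t • x : 𝒪) : Cp)‖ = ((p : ℝ) ^ t)⁻¹ * ‖(x : Cp)‖ := by
  rw [nsmul_eq_mul]
  push_cast
  rw [norm_mul, norm_pow, hnorm, inv_pow]

theorem nsmul_mem_normIdeal (hnorm : ‖(p : Cp)‖ = (p : ℝ)⁻¹) {a t : ℕ} {x : 𝒪}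
    (hx : x ∈ normIdeal p Cp a) : p ^ t • x ∈ normIdeal p Cp (a + t) := by
  rw [mem_normIdeal, norm_coe_pow_nsmul hnorm, pow_add, mul_inv, mul_comm ((p : ℝ) ^ a)⁻¹]
  exact mul_le_mul_of_nonneg_left hx (by positivity)

theorem nsmul_mem_normIdeal_iff (hnorm : ‖(p : Cp)‖ = (p : ℝ)⁻¹) (hp : p ≠ 0) {a t : ℕ} {x : 𝒪} :
    p ^ t • x ∈ normIdeal p Cp (a + t) ↔ x ∈ normIdeal p Cp a := by
  rw [mem_normIdeal, mem_normIdeal, norm_coe_pow_nsmul hnorm, pow_add, mul_inv,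
    mul_comm ((p : ℝ) ^ a)⁻¹, mul_le_mul_iff_of_pos_left (by positivity)]

theorem glReduction_eq_iff {n : ℕ} {g h : GL (Fin r) 𝒪} :
    glReduction p Cp r n g = glReduction p Cp r n h ↔
      (g : 𝕄) - h ∈ (normIdeal p Cp n).matrix (Fin r) := by
  simp only [glReduction, RingHom.toMonoidHom_eq_coe, Units.ext_iff, Units.coe_map,
    MonoidHom.coe_coe, RingHom.mapMatrix_apply, ← Matrix.ext_iff, Matrix.map_apply,
    Ideal.Quotient.mk_eq_mk_iff_sub_mem, Ideal.mem_matrix, Matrix.sub_apply]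

theorem inv_mul_mem_ker_glReduction_iff {n : ℕ} {g h : GL (Fin r) 𝒪} :
    g⁻¹ * h ∈ (glReduction p Cp r n).ker ↔
      (g : 𝕄) - h ∈ (normIdeal p Cp n).matrix (Fin r) := by
  rw [MonoidHom.mem_ker, map_mul, map_inv, inv_mul_eq_one, glReduction_eq_iff]

theorem mem_ker_glReduction_iff {n : ℕ} {g : GL (Fin r) 𝒪} :
    g ∈ (glReduction p Cp r n).ker ↔
      (g : 𝕄) - 1 ∈ (normIdeal p Cp n).matrix (Fin r) := by
  rw [← Ideal.neg_mem_iff, neg_sub, ← Units.val_one, ← inv_mul_mem_ker_glReduction_iff, inv_one,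
    one_mul]

theorem ker_glReduction_antitone : Antitone fun n => (glReduction p Cp r n).ker := by
  intro a b hab g
  simp only [mem_ker_glReduction_iff]
  exact fun hg => Ideal.matrix_monotone _ (normIdeal_antitone hab) hg

theorem val_pow_sub_one_sub_nsmul_mem {m : ℕ} {g : GL (Fin r) 𝒪}
    (hg : g ∈ (glReduction p Cp r m).ker) (q : ℕ) :
    ((g ^ q : GL (Fin r) 𝒪) : 𝕄) - 1 - q • ((g : 𝕄) - 1) ∈
      (normIdeal p Cp (m + m)).matrix (Fin r) := by
  rw [mem_ker_glReduction_iff] at hg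
  rw [Units.val_pow_eq_pow_val]
  exact pow_sub_one_sub_nsmul_mem _
    (Ideal.matrix_monotone _ (normIdeal_mul_le m m) (Ideal.mul_mem_matrix_mul hg hg)) q

theorem pow_mem_ker_glReduction (hnorm : ‖(p : Cp)‖ = (p : ℝ)⁻¹) {t m : ℕ} (htm : t ≤ m)
    {g : GL (Fin r) 𝒪} (hg : g ∈ (glReduction p Cp r m).ker) :
    g ^ p ^ t ∈ (glReduction p Cp r (m + t)).ker := by
  have hS := Ideal.matrix_monotone _ (normIdeal_antitone (by omega : m + t ≤ m + m))
    (val_pow_sub_one_sub_nsmul_mem hg (p ^ t))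
  rw [mem_ker_glReduction_iff] at hg ⊢
  rw [← sub_add_cancel (↑(g ^ p ^ t) - 1 : 𝕄) (p ^ t • ((g : 𝕄) - 1))]
  exact Ideal.add_mem _ hS fun i j => nsmul_mem_normIdeal hnorm (hg i j)

theorem pow_inv_mul_pow_mem_ker_glReduction_iff (hnorm : ‖(p : Cp)‖ = (p : ℝ)⁻¹) (hp : p ≠ 0)
    {t m : ℕ} (htm : t < m) {g h : GL (Fin r) 𝒪} (hg : g ∈ (glReduction p Cp r m).ker)
    (hh : h ∈ (glReduction p Cp r m).ker) :
    (g ^ p ^ t)⁻¹ * h ^ p ^ t ∈ (glReduction p Cp r (m + t + 1)).ker ↔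
      g⁻¹ * h ∈ (glReduction p Cp r (m + 1)).ker := by
  set J := (normIdeal p Cp (m + t + 1)).matrix (Fin r)
  have hS : ∀ u ∈ (glReduction p Cp r m).ker,
      (↑(u ^ p ^ t) - 1 - p ^ t • ((u : 𝕄) - 1) : 𝕄) ∈ J := fun u hu =>
    Ideal.matrix_monotone _ (normIdeal_antitone (by omega)) (val_pow_sub_one_sub_nsmul_mem hu _)
  have hsplit : (↑(g ^ p ^ t) - ↑(h ^ p ^ t) : 𝕄) = p ^ t • ((g : 𝕄) - h) +
      ((↑(g ^ p ^ t) - 1 - p ^ t • ((g : 𝕄) - 1)) -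
        (↑(h ^ p ^ t) - 1 - p ^ t • ((h : 𝕄) - 1))) := by
    simp only [smul_sub]
    abel
  rw [inv_mul_mem_ker_glReduction_iff, inv_mul_mem_ker_glReduction_iff, hsplit,
    J.add_mem_iff_left (J.sub_mem (hS g hg) (hS h hh))]
  simp only [J, Ideal.mem_matrix, Matrix.smul_apply, add_right_comm m t 1,
    nsmul_mem_normIdeal_iff hnorm hp]

theorem isClosed_normIdeal (n : ℕ) : IsClosed (normIdeal p Cp n : Set 𝒪) :=
  isClosed_le (continuous_norm.comp continuous_subtype_val) continuous_const

theorem isClosed_ker_glReduction (n : ℕ) :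
    IsClosed ((glReduction p Cp r n).ker : Set (GL (Fin r) 𝒪)) := by
  have h : ((glReduction p Cp r n).ker : Set (GL (Fin r) 𝒪)) =
      (fun g : GL (Fin r) 𝒪 => (g : 𝕄) - 1) ⁻¹' ((normIdeal p Cp n).matrix (Fin r)) := by
    ext g
    exact mem_ker_glReduction_iff
  rw [h]
  exact (Ideal.isClosed_matrix (isClosed_normIdeal n)).preimage
    (Units.continuous_val.sub continuous_const)

theorem tendsto_val_of_mem_ker_glReduction (hp : 1 < p) {w : ℕ → GL (Fin r) 𝒪}
    (hw : ∀ j, w j ∈ (glReduction p Cp r j).ker) :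
    Tendsto (fun j => (w j : 𝕄)) atTop (𝓝 1) := by
  have hε : Tendsto (fun j : ℕ => ((p : ℝ) ^ j)⁻¹) atTop (𝓝 0) :=
    tendsto_inv_atTop_zero.comp (tendsto_pow_atTop_atTop_of_one_lt (by exact_mod_cast hp))
  have h0 : Tendsto (fun j => (w j : 𝕄) - 1) atTop (𝓝 0) :=
    tendsto_pi_nhds.2 fun a => tendsto_pi_nhds.2 fun b =>
      squeeze_zero_norm (fun j => mem_ker_glReduction_iff.1 (hw j) a b) hε
  simpa using h0.add_const 1

theorem tendsto_of_mem_ker_glReduction (hp : 1 < p) {w : ℕ → GL (Fin r) 𝒪}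
    (hw : ∀ j, w j ∈ (glReduction p Cp r j).ker) : Tendsto w atTop (𝓝 1) :=
  Units.isInducing_embedProduct.tendsto_nhds_iff.2 <|
    (tendsto_val_of_mem_ker_glReduction hp hw).prodMk_nhds <|
      (MulOpposite.continuous_op.tendsto _).comp <|
        tendsto_val_of_mem_ker_glReduction hp fun j => inv_mem (hw j)

variable {G : Subgroup (GL (Fin r) (integerSubring Cp))}

theorem congrSubgroup_antitone : Antitone (congrSubgroup p Cp r G) :=
  fun _ _ hab => inf_le_inf_left G (ker_glReduction_antitone hab)

theorem isClosed_congrSubgroup (hG : IsClosed (G : Set (GL (Fin r) 𝒪)))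
    (n : ℕ) : IsClosed (congrSubgroup p Cp r G n : Set (GL (Fin r) 𝒪)) :=
  hG.inter (isClosed_ker_glReduction n)

theorem pow_mem_congrSubgroup (hnorm : ‖(p : Cp)‖ = (p : ℝ)⁻¹) {t m : ℕ} (htm : t ≤ m)
    {g : GL (Fin r) 𝒪} (hg : g ∈ congrSubgroup p Cp r G m) :
    g ^ p ^ t ∈ congrSubgroup p Cp r G (m + t) :=
  ⟨pow_mem hg.1 _, pow_mem_ker_glReduction hnorm htm hg.2⟩

theorem pow_inv_mul_pow_mem_congrSubgroup_iff (hnorm : ‖(p : Cp)‖ = (p : ℝ)⁻¹) (hp : p ≠ 0)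
    {t m : ℕ} (htm : t < m) {g h : GL (Fin r) 𝒪} (hg : g ∈ congrSubgroup p Cp r G m)
    (hh : h ∈ congrSubgroup p Cp r G m) :
    (g ^ p ^ t)⁻¹ * h ^ p ^ t ∈ congrSubgroup p Cp r G (m + t + 1) ↔
      g⁻¹ * h ∈ congrSubgroup p Cp r G (m + 1) := by
  obtain ⟨hgG, hgK⟩ := Subgroup.mem_inf.1 hg
  obtain ⟨hhG, hhK⟩ := Subgroup.mem_inf.1 hh
  rw [congrSubgroup, congrSubgroup, Subgroup.mem_inf, Subgroup.mem_inf,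
    pow_inv_mul_pow_mem_ker_glReduction_iff hnorm hp htm hgK hhK]
  exact and_congr_left' (iff_of_true (G.mul_mem (G.inv_mem (G.pow_mem hgG _)) (G.pow_mem hhG _))
    (G.mul_mem (G.inv_mem hgG) hhG))

theorem exists_pow_inv_mul_mem_congrSubgroup (hnorm : ‖(p : Cp)‖ = (p : ℝ)⁻¹) (hp : p ≠ 0)
    {t m : ℕ} (ht : 1 ≤ t) (htm : t < m)
    (hidx : (congrSubgroup p Cp r G (m + t)).relIndex (congrSubgroup p Cp r G m) =
      (congrSubgroup p Cp r G (m + 1 + t)).relIndex (congrSubgroup p Cp r G (m + 1)))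
    (hidx0 : (congrSubgroup p Cp r G (m + t)).relIndex (congrSubgroup p Cp r G m) ≠ 0)
    {y : GL (Fin r) 𝒪} (hy : y ∈ congrSubgroup p Cp r G (m + t)) :
    ∃ g ∈ congrSubgroup p Cp r G m, (g ^ p ^ t)⁻¹ * y ∈ congrSubgroup p Cp r G (m + t + 1) := by
  refine Subgroup.exists_inv_mul_mem_of_relIndex_eq (· ^ p ^ t)
    (fun g hg => pow_mem_congrSubgroup hnorm htm.le hg)
    (fun g hg h hh => pow_inv_mul_pow_mem_congrSubgroup_iff hnorm hp htm hg hh)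
    (Subgroup.relIndex_succ_eq_of_relIndex_add_eq congrSubgroup_antitone hidx hidx0) ?_ hy
  rw [hidx, add_right_comm m 1 t] at hidx0
  exact fun h0 => hidx0 (Subgroup.relIndex_eq_zero_of_le_right
    (congrSubgroup_antitone (by omega)) h0)

end CongruenceSubgroups

theorem closure_pow_eq_congrSubgroup_general
    (p : ℕ) (hp : p.Prime)
    (Cp : Type*) [NormedField Cp] [IsUltrametricDist Cp]
    (hnorm : ‖(p : Cp)‖ = (p : ℝ)⁻¹)
    (r : ℕ) (G : Subgroup (GL (Fin r) (integerSubring Cp)))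
    (hG : IsCompact (G : Set (GL (Fin r) (integerSubring Cp))))
    (n₀ : ℕ) (hn₀ : 1 ≤ n₀) (k : ℕ)
    (hquot : ∀ n : ℕ, n₀ < n →
      ∃ f : ↥(congrSubgroup p Cp r G n) →* Multiplicative (Fin k → ZMod (p ^ n₀)),
        Function.Surjective f ∧
          f.ker = (congrSubgroup p Cp r G (n + n₀)).subgroupOf (congrSubgroup p Cp r G n)) :
    ∀ n : ℕ, n₀ < n →
      (Subgroup.closure
        ((fun g => g ^ (p ^ n₀)) '' ((congrSubgroup p Cp r G n) :
          Set (GL (Fin r) (integerSubring Cp))))).topologicalClosure =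
        congrSubgroup p Cp r G (n + n₀) := by
  intro n hn
  have hidx : ∀ m, n₀ < m → (congrSubgroup p Cp r G (m + n₀)).relIndex (congrSubgroup p Cp r G m)
      = Nat.card (Multiplicative (Fin k → ZMod (p ^ n₀))) := fun m hm => by
    obtain ⟨f, hf, hker⟩ := hquot m hm
    exact Subgroup.relIndex_eq_card_of_surjective f hf hker
  have : NeZero (p ^ n₀) := ⟨pow_ne_zero _ hp.ne_zero⟩
  set H := Subgroup.closure ((fun g => g ^ (p ^ n₀)) ''
    (congrSubgroup p Cp r G n : Set (GL (Fin r) (integerSubring Cp))))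
  have hH : H ≤ congrSubgroup p Cp r G (n + n₀) := by
    rw [Subgroup.closure_le]
    rintro _ ⟨g, hg, rfl⟩
    exact pow_mem_congrSubgroup hnorm hn.le hg
  refine le_antisymm (H.topologicalClosure_minimal hH (isClosed_congrSubgroup hG.isClosed _))
    fun x hx => ?_
  have step : ∀ j ≥ n, ∀ y ∈ congrSubgroup p Cp r G (j + n₀),
      ∃ h ∈ H, h⁻¹ * y ∈ congrSubgroup p Cp r G (j + 1 + n₀) := fun j hj y hy => by
    obtain ⟨g, hg, hgy⟩ := exists_pow_inv_mul_mem_congrSubgroup hnorm hp.ne_zero hn₀ (by omega)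
      ((hidx j (by omega)).trans (hidx (j + 1) (by omega)).symm)
      (by rw [hidx j (by omega)]; exact Nat.card_pos.ne') hy
    exact ⟨g ^ p ^ n₀, Subgroup.subset_closure ⟨g, congrSubgroup_antitone hj hg, rfl⟩,
      by rwa [add_right_comm j 1 n₀]⟩
  choose a haH hax using Subgroup.exists_mem_inv_mul_mem_of_step
    (N := fun j => congrSubgroup p Cp r G (j + n₀)) step hx
  exact mem_closure_of_tendsto_inv_mul haH (tendsto_of_mem_ker_glReduction hp.one_lt fun i =>
    ker_glReduction_antitone (by omega) (hax i).2)

/-- Let `G` be a compact, topologically finitely generated subgroup of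
`GL_r(𝒪)` and `n₀ ≥ 1`.  Suppose there is `k ≥ 0` such that for every `n > n₀` the quotient
`G_n/G_{n+n₀}` is isomorphic to `(ℤ/p^{n₀}ℤ)^k` (expressed below by the existence of a
surjective homomorphism `G_n → (ℤ/p^{n₀}ℤ)^k` with kernel `G_{n+n₀}`).  Then for every
`n > n₀`, the (topological) closure of the subgroup generated by the `p^{n₀}`-th powers
`{g^{p^{n₀}} : g ∈ G_n}` equals `G_{n+n₀}`.  (Since the compact subgroup `G` is closed,
the closure in `G` agrees with the closure in `GL_r(𝒪)`.) -/
theorem closure_pow_eq_congrSubgroup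
    (p : ℕ) (hp : p.Prime)
    (Cp : Type*) [NormedField Cp] [IsUltrametricDist Cp] [IsAlgClosed Cp] [CompleteSpace Cp]
    (hnorm : ‖(p : Cp)‖ = (p : ℝ)⁻¹)
    (r : ℕ) (G : Subgroup (GL (Fin r) (integerSubring Cp)))
    (hG : IsCompact (G : Set (GL (Fin r) (integerSubring Cp))))
    (hfg : ∃ S : Set (GL (Fin r) (integerSubring Cp)), S.Finite ∧
      (Subgroup.closure S).topologicalClosure = G)
    (n₀ : ℕ) (hn₀ : 1 ≤ n₀) (k : ℕ)
    (hquot : ∀ n : ℕ, n₀ < n →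
      ∃ f : ↥(congrSubgroup p Cp r G n) →* Multiplicative (Fin k → ZMod (p ^ n₀)),
        Function.Surjective f ∧
          f.ker = (congrSubgroup p Cp r G (n + n₀)).subgroupOf (congrSubgroup p Cp r G n)) :
    ∀ n : ℕ, n₀ < n →
      (Subgroup.closure
        ((fun g => g ^ (p ^ n₀)) '' ((congrSubgroup p Cp r G n) :
          Set (GL (Fin r) (integerSubring Cp))))).topologicalClosure =
        congrSubgroup p Cp r G (n + n₀) :=
  closure_pow_eq_congrSubgroup_general p hp Cp hnorm r G hG n₀ hn₀ k hquot
end
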